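/- arXiv:1601.04157 — 4 statements merged into one kernel-verified Lean document; each statement's English description precedes it below -/
import Mathlib

section
/- Let ξ be a standard normal random variable (real-valued, with law N(0,1)), let k be a positive integer, and let 0 < h ≤ e^{-1}. Set A_h = √(2k·ln(1/h)) and let ζ_h be the truncation of ξ at level A_h, i.e. ζ_h = ξ if |ξ| ≤ A_h, ζ_h = A_h if ξ > A_h, and ζ_h = −A_h if ξ < −A_h. Then E[(ξ − ζ_h)²] ≤ h^k. -/
/-!
Since `(ξ - ζ_h)² = (|ξ| - A)₊²` and `(e·t·y₊)² ≤ 4·exp(t·y)` (from `e·y ≤ exp y`), a Chernoff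
argument bounds the error by `4/(e t)² · exp(-t A) · (M(t) + M(-t))`, where `M(t) = exp(t²/2)` is
the Gaussian moment generating function. Taking `t = A` gives `8/(e A)² · exp(-A²/2)`, and
`exp(-A²/2) = h^k` while `(e A)² ≥ 4 · 2` because `A² = 2k ln(1/h) ≥ 2`.
-/

open MeasureTheory ProbabilityTheory Real

lemma sq_exp_one_mul_max_zero_le {t : ℝ} (ht : 0 < t) (x : ℝ) :
    (exp 1 * t * max x 0) ^ 2 ≤ 4 * exp (t * x) := by
  rcases le_or_gt x 0 with hx | hx
  · rw [max_eq_right hx, mul_zero, zero_pow two_ne_zero]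
    positivity
  · calc (exp 1 * t * max x 0) ^ 2 = 4 * (exp 1 * (t * x / 2)) ^ 2 := by
          rw [max_eq_left hx.le]; ring
      _ ≤ 4 * exp (t * x / 2) ^ 2 := by gcongr; exact exp_one_mul_le_exp
      _ = 4 * exp (t * x) := by rw [← exp_nat_mul]; ring_nf

lemma exp_mul_abs_le_add (t x : ℝ) : exp (t * |x|) ≤ exp (t * x) + exp (-t * x) := by
  rcases abs_cases x with ⟨hx, -⟩ | ⟨hx, -⟩ <;> rw [hx]
  · exact le_add_of_nonneg_right (exp_nonneg _)
  · rw [mul_neg, ← neg_mul]; exact le_add_of_nonneg_left (exp_nonneg _)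

lemma sq_max_abs_sub_zero_le {t : ℝ} (ht : 0 < t) (A x : ℝ) :
    max (|x| - A) 0 ^ 2
      ≤ 4 / (exp 1 * t) ^ 2 * exp (-(t * A)) * (exp (t * x) + exp (-t * x)) := by
  have het : 0 < (exp 1 * t) ^ 2 := by positivity
  rw [div_mul_eq_mul_div, div_mul_eq_mul_div, le_div_iff₀ het]
  calc max (|x| - A) 0 ^ 2 * (exp 1 * t) ^ 2 = (exp 1 * t * max (|x| - A) 0) ^ 2 := by ring
    _ ≤ 4 * exp (t * (|x| - A)) := sq_exp_one_mul_max_zero_le ht _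
    _ = 4 * exp (-(t * A)) * exp (t * |x|) := by rw [mul_assoc, ← exp_add]; ring_nf
    _ ≤ 4 * exp (-(t * A)) * (exp (t * x) + exp (-t * x)) := by
      gcongr; exact exp_mul_abs_le_add t x

theorem integral_sq_max_abs_sub_zero_le {Ω : Type*} [MeasurableSpace Ω] {μ : Measure Ω}
    {X : Ω → ℝ} {t : ℝ} (ht : 0 < t) (hpos : Integrable (fun ω ↦ exp (t * X ω)) μ)
    (hneg : Integrable (fun ω ↦ exp (-t * X ω)) μ) (A : ℝ) :
    ∫ ω, max (|X ω| - A) 0 ^ 2 ∂μ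
      ≤ 4 / (exp 1 * t) ^ 2 * exp (-(t * A)) * (mgf X μ t + mgf X μ (-t)) := by
  rw [mgf, mgf, ← integral_add hpos hneg, ← integral_const_mul]
  exact integral_mono_of_nonneg (ae_of_all _ fun _ ↦ by positivity)
    ((hpos.add hneg).const_mul _) (ae_of_all _ fun ω ↦ sq_max_abs_sub_zero_le ht A (X ω))

theorem integral_sq_max_abs_sub_zero_le_of_map_eq_gaussianReal {Ω : Type*} [MeasurableSpace Ω]
    {μ : Measure Ω} {X : Ω → ℝ} (hX : μ.map X = gaussianReal 0 1) {A : ℝ} (hA : 0 < A) :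
    ∫ ω, max (|X ω| - A) 0 ^ 2 ∂μ ≤ 8 / (exp 1 * A) ^ 2 * exp (-(A ^ 2 / 2)) := by
  have : NeZero μ := ⟨fun h0 ↦ NeZero.ne (gaussianReal 0 1) (by rw [← hX, h0, Measure.map_zero])⟩
  have hint (s : ℝ) : Integrable (fun ω ↦ exp (s * X ω)) μ :=
    mgf_pos_iff.mp (by rw [mgf_gaussianReal hX]; positivity)
  calc _ ≤ 4 / (exp 1 * A) ^ 2 * exp (-(A * A)) * (mgf X μ A + mgf X μ (-A)) :=
        integral_sq_max_abs_sub_zero_le hA (hint A) (hint (-A)) A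
    _ = 8 / (exp 1 * A) ^ 2 * exp (-(A ^ 2 / 2)) := by
      rw [mgf_gaussianReal hX, mgf_gaussianReal hX, mul_assoc, mul_add, ← exp_add, ← exp_add,
        NNReal.coe_one]
      ring_nf

lemma sq_sub_truncation_eq {A : ℝ} (hA : 0 ≤ A) (x : ℝ) :
    (x - if |x| ≤ A then x else if x > A then A else -A) ^ 2 = max (|x| - A) 0 ^ 2 := by
  split_ifs with h₁ h₂
  · rw [sub_self, max_eq_right (by linarith)]
  · rw [max_eq_left (by linarith), abs_of_pos (by linarith)]
  · have hx : A < -x := (lt_abs.mp (not_le.mp h₁)).resolve_left h₂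
    rw [max_eq_left (by linarith), abs_of_neg (by linarith)]
    ring

theorem gaussian_truncation_error_general {Ω : Type*} [MeasureSpace Ω]
    (ξ : Ω → ℝ)
    (hlaw : Measure.map ξ ℙ = gaussianReal 0 1)
    (k : ℕ) (hk : 0 < k) (h : ℝ) (hh0 : 0 < h) (hh1 : h ≤ Real.exp (-1)) :
    ∫ ω, (ξ ω - (if |ξ ω| ≤ Real.sqrt (2 * k * Real.log (1 / h)) then ξ ω
        else if ξ ω > Real.sqrt (2 * k * Real.log (1 / h)) then
          Real.sqrt (2 * k * Real.log (1 / h))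
        else -Real.sqrt (2 * k * Real.log (1 / h)))) ^ 2 ∂ℙ ≤ h ^ k := by
  set A := √(2 * k * log (1 / h))
  have hlog : 1 ≤ log (1 / h) := by
    rw [one_div, log_inv, le_neg]
    exact (log_le_iff_le_exp hh0).mpr hh1
  have hk1 : (1 : ℝ) ≤ k := by exact_mod_cast hk
  have hA2 : A ^ 2 = 2 * k * log (1 / h) := sq_sqrt (by positivity)
  have hA : 0 < A := sqrt_pos.mpr (by positivity)
  have hexp : exp (-(A ^ 2 / 2)) = h ^ k := by
    rw [hA2, one_div, log_inv, ← exp_log (pow_pos hh0 k), log_pow]; ring_nf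
  have he : 2 < exp 1 := exp_one_gt_two
  simp only [sq_sub_truncation_eq hA.le]
  calc _ ≤ 8 / (exp 1 * A) ^ 2 * h ^ k :=
        hexp ▸ integral_sq_max_abs_sub_zero_le_of_map_eq_gaussianReal hlaw hA
    _ ≤ h ^ k := by
      refine mul_le_of_le_one_left (by positivity) ((div_le_one (by positivity)).mpr ?_)
      calc (8 : ℝ) = 2 ^ 2 * 2 := by norm_num
        _ ≤ exp 1 ^ 2 * A ^ 2 := by gcongr; nlinarith
        _ = (exp 1 * A) ^ 2 := (mul_pow _ _ _).symm

/-- Truncating a standard Gaussian random variable `ξ` at level `A_h = √(2k ln(1/h))`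
produces `ζ_h` with mean-square truncation error `E[(ξ − ζ_h)²] ≤ h^k`. -/
theorem gaussian_truncation_error {Ω : Type*} [MeasureSpace Ω]
    [IsProbabilityMeasure (ℙ : Measure Ω)]
    (ξ : Ω → ℝ) (hξ : Measurable ξ)
    (hlaw : Measure.map ξ ℙ = gaussianReal 0 1)
    (k : ℕ) (hk : 0 < k) (h : ℝ) (hh0 : 0 < h) (hh1 : h ≤ Real.exp (-1)) :
    ∫ ω, (ξ ω - (if |ξ ω| ≤ Real.sqrt (2 * k * Real.log (1 / h)) then ξ ω
        else if ξ ω > Real.sqrt (2 * k * Real.log (1 / h)) then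
          Real.sqrt (2 * k * Real.log (1 / h))
        else -Real.sqrt (2 * k * Real.log (1 / h)))) ^ 2 ∂ℙ ≤ h ^ k :=
  gaussian_truncation_error_general ξ hlaw k hk h hh0 hh1
end

section
/- Let I : ℝ^d → ℝ be twice continuously differentiable with ‖∇²I(z)‖ ≤ M (operator norm of the Hessian) for all z ∈ ℝ^d, and let δ, L > 0. Let x, y ∈ ℝ^d with δ ≤ |∇I(y)| ≤ L. If |I(y) − I(x)| ≤ δ⁴/(4ML²), then there exists λ ∈ ℝ such that I(y + λ∇I(y)) = I(x) and |λ| ≤ (2/δ²)·|I(y) − I(x)|. (Well-posedness of the projection step onto the level set {z : I(z) = I(x)} in direction ∇I(y).) -/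
/-!
Along the line `t ↦ y + t • ∇I(y)` the function `g t = I (y + t • ∇I(y))` has derivative
`⟪∇I(y + t • ∇I(y)), ∇I(y)⟫`. The Hessian bound makes `∇I` `M`-Lipschitz, so this derivative stays
above `|∇I(y)|² - M |t| L² ≥ δ²/2` for `|t| ≤ δ²/(2ML²)`. A function growing at rate `≥ δ²/2` on
that interval takes every value within `δ⁴/(4ML²)` of `g 0 = I y`, at a point `t` with
`|t| ≤ |I y - I x| / (δ²/2)`, by the intermediate value theorem.
-/

open Set
open scoped RealInnerProductSpace

theorem exists_eq_abs_le_of_le_deriv {g : ℝ → ℝ} {c r a : ℝ} (hc : 0 < c)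
    (hg : Differentiable ℝ g) (hderiv : ∀ t ∈ Icc (-r) r, c ≤ deriv g t)
    (ha : |a - g 0| ≤ c * r) : ∃ t, g t = a ∧ |t| ≤ |a - g 0| / c := by
  set s := (a - g 0) / c with hs_def
  have hcs : c * s = a - g 0 := mul_div_cancel₀ _ hc.ne'
  have hs : s ∈ Icc (-r) r := by
    rw [mem_Icc, ← abs_le, hs_def, abs_div, abs_of_pos hc, div_le_iff₀ hc, mul_comm]
    exact ha
  have h0 : (0 : ℝ) ∈ Icc (-r) r := ⟨by linarith [hs.1, hs.2], by linarith [hs.1, hs.2]⟩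
  have hgrow : ∀ u ∈ Icc (-r) r, ∀ w ∈ Icc (-r) r, u ≤ w → c * (w - u) ≤ g w - g u :=
    (convex_Icc _ _).mul_sub_le_image_sub_of_le_deriv hg.continuous.continuousOn
      hg.differentiableOn fun t ht => hderiv t (interior_subset ht)
  have ha_mem : a ∈ uIcc (g 0) (g s) := by
    rcases le_total 0 s with hs0 | hs0
    · have := hgrow 0 h0 s hs hs0
      exact mem_uIcc.2 (Or.inl ⟨by nlinarith, by linarith⟩)
    · have := hgrow s hs 0 h0 hs0
      exact mem_uIcc.2 (Or.inr ⟨by linarith, by nlinarith⟩)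
  obtain ⟨t, ht, rfl⟩ := intermediate_value_uIcc hg.continuous.continuousOn ha_mem
  refine ⟨t, rfl, ?_⟩
  simpa [hs_def, abs_div, abs_of_pos hc] using abs_sub_left_of_mem_uIcc ht

section Gradient

variable {E : Type*} [NormedAddCommGroup E] [InnerProductSpace ℝ E] [CompleteSpace E]
  {f : E → ℝ} {M : ℝ}

theorem norm_gradient_sub_le_of_norm_fderiv_gradient_le (hf : ContDiff ℝ 2 f)
    (hM : ∀ z, ‖fderiv ℝ (gradient f) z‖ ≤ M) (a b : E) :
    ‖gradient f a - gradient f b‖ ≤ M * ‖a - b‖ := by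
  have hgrad : ContDiff ℝ 1 (gradient f) :=
    (InnerProductSpace.toDual ℝ E).symm.contDiff.comp (hf.fderiv_right (by norm_num))
  exact convex_univ.norm_image_sub_le_of_norm_fderiv_le
    (fun z _ => (hgrad.differentiable one_ne_zero).differentiableAt) (fun z _ => hM z) trivial trivial

theorem hasDerivAt_comp_add_smul (hf : Differentiable ℝ f) (y v : E) (t : ℝ) :
    HasDerivAt (fun s : ℝ => f (y + s • v)) ⟪gradient f (y + t • v), v⟫ t := by
  have hline : HasDerivAt (fun s : ℝ => y + s • v) v t := by
    simpa using ((hasDerivAt_id t).smul_const v).const_add y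
  exact ((hf _).hasFDerivAt.comp_hasDerivAt t hline).congr_deriv inner_gradient_left.symm

theorem inner_gradient_add_smul_ge
    (hLip : ∀ a b : E, ‖gradient f a - gradient f b‖ ≤ M * ‖a - b‖) (y v : E) (t : ℝ) :
    ⟪gradient f y, v⟫ - M * |t| * ‖v‖ ^ 2 ≤ ⟪gradient f (y + t • v), v⟫ := by
  have hdiff : |⟪gradient f (y + t • v) - gradient f y, v⟫| ≤ M * |t| * ‖v‖ ^ 2 :=
    calc |⟪gradient f (y + t • v) - gradient f y, v⟫|
        ≤ ‖gradient f (y + t • v) - gradient f y‖ * ‖v‖ := abs_real_inner_le_norm _ _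
      _ ≤ M * ‖(y + t • v) - y‖ * ‖v‖ := by gcongr; exact hLip _ _
      _ = M * |t| * ‖v‖ ^ 2 := by
        rw [add_sub_cancel_left, norm_smul, Real.norm_eq_abs]; ring
  rw [inner_sub_left] at hdiff
  linarith [neg_abs_le (⟪gradient f (y + t • v), v⟫ - ⟪gradient f y, v⟫)]

end Gradient

theorem projection_step_exists_general (d : ℕ) (I : EuclideanSpace ℝ (Fin d) → ℝ)
    (hI : ContDiff ℝ 2 I) (M δ L : ℝ) (hδ : 0 < δ)
    (hHess : ∀ z : EuclideanSpace ℝ (Fin d), ‖fderiv ℝ (fun w => gradient I w) z‖ ≤ M)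
    (x y : EuclideanSpace ℝ (Fin d))
    (hylb : δ ≤ ‖gradient I y‖) (hyub : ‖gradient I y‖ ≤ L)
    (hclose : |I y - I x| ≤ δ ^ 4 / (4 * M * L ^ 2)) :
    ∃ lam : ℝ, I (y + lam • gradient I y) = I x ∧
      |lam| ≤ (2 / δ ^ 2) * |I y - I x| := by
  set v := gradient I y
  set r := δ ^ 2 / (2 * M * L ^ 2)
  have hM : 0 ≤ M := (norm_nonneg _).trans (hHess y)
  have hL : 0 < L := by linarith
  -- For `M = 0` the divisions in `r` and `hclose` are by zero: `r = 0` and `I y = I x`.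
  have hMr : M * r * L ^ 2 ≤ δ ^ 2 / 2 := by
    rcases hM.eq_or_lt with rfl | hM
    · rw [zero_mul, zero_mul]; positivity
    · exact (by simp only [r]; field_simp : M * r * L ^ 2 = δ ^ 2 / 2).le
  have hdiff : Differentiable ℝ I := hI.differentiable (by norm_num)
  have hline := hasDerivAt_comp_add_smul hdiff y v
  have hderiv : ∀ t ∈ Icc (-r) r, δ ^ 2 / 2 ≤ deriv (fun s : ℝ => I (y + s • v)) t := by
    intro t ht
    have hlower := inner_gradient_add_smul_ge
      (norm_gradient_sub_le_of_norm_fderiv_gradient_le hI hHess) y v t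
    have hdrop : M * |t| * ‖v‖ ^ 2 ≤ M * r * L ^ 2 := by
      gcongr
      exact abs_le.2 ht
    have hvv : δ ^ 2 ≤ ⟪v, v⟫ := by
      rw [real_inner_self_eq_norm_sq]; gcongr
    rw [(hline t).deriv]
    linarith
  obtain ⟨t, ht, hbound⟩ := exists_eq_abs_le_of_le_deriv (a := I x) (by positivity)
    (fun t => (hline t).differentiableAt) hderiv (by
      rw [zero_smul, add_zero, abs_sub_comm]
      exact hclose.trans_eq (by ring))
  refine ⟨t, ht, ?_⟩
  rw [zero_smul, add_zero, abs_sub_comm] at hbound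
  exact hbound.trans_eq (by ring)

/-- Well-posedness of the projection step: if `I` is `C²` with Hessian bounded by `M`,
`δ ≤ |∇I(y)| ≤ L` and `|I(y) − I(x)| ≤ δ⁴/(4ML²)`, then there is `λ` with
`I(y + λ∇I(y)) = I(x)` and `|λ| ≤ (2/δ²)|I(y) − I(x)|`. -/
theorem projection_step_exists (d : ℕ) (I : EuclideanSpace ℝ (Fin d) → ℝ)
    (hI : ContDiff ℝ 2 I) (M δ L : ℝ) (hδ : 0 < δ) (hL : 0 < L)
    (hHess : ∀ z : EuclideanSpace ℝ (Fin d), ‖fderiv ℝ (fun w => gradient I w) z‖ ≤ M)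
    (x y : EuclideanSpace ℝ (Fin d))
    (hylb : δ ≤ ‖gradient I y‖) (hyub : ‖gradient I y‖ ≤ L)
    (hclose : |I y - I x| ≤ δ ^ 4 / (4 * M * L ^ 2)) :
    ∃ lam : ℝ, I (y + lam • gradient I y) = I x ∧
      |lam| ≤ (2 / δ ^ 2) * |I y - I x| :=
  projection_step_exists_general d I hI M δ L hδ hHess x y hylb hyub hclose
end

section
/- Let (Ω, F, P) be a probability space, x ∈ ℝ^d, and let X, X̂ : Ω → ℝ^d be square-integrable random vectors with I(X) = I(x) almost surely. Let I : ℝ^d → ℝ be twice continuously differentiable with |∇I(z)| ≤ L and ‖∇²I(z)‖ ≤ M for all z ∈ ℝ^d. Then |E[I(X̂) − I(x)]| ≤ L·|E[X̂ − X]| + (M/2)·E[|X̂ − X|²] + M·(E[|X − x|²])^{1/2}·(E[|X̂ − X|²])^{1/2}. -/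
/-!
Taylor's formula at `X` gives `I(X̂) - I(X) = ⟪∇I(X), X̂ - X⟫ + R` with `|R| ≤ (M/2)|X̂ - X|²`, and since
`I(X) = I(x)` almost surely the left side is `I(X̂) - I(x)`. Freezing the gradient at the deterministic
point `x` costs `⟪∇I(X) - ∇I(x), X̂ - X⟫`, which the Lipschitz bound on `∇I` and Cauchy–Schwarz control
by `M (E|X - x|²)^{1/2} (E|X̂ - X|²)^{1/2}`; the remaining term `⟪∇I(x), X̂ - X⟫` has mean
`⟪∇I(x), E[X̂ - X]⟫`, of absolute value at most `L |E[X̂ - X]|`.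
-/

open MeasureTheory ProbabilityTheory
open scoped RealInnerProductSpace

section Taylor

variable {E F : Type*} [NormedAddCommGroup E] [NormedSpace ℝ E]
  [NormedAddCommGroup F] [NormedSpace ℝ F]

theorem norm_image_sub_sub_fderiv_le_of_lipschitz {f : E → F} {f' : E → E →L[ℝ] F}
    (hf : ∀ z, HasFDerivAt f (f' z) z) {M : ℝ} (hf' : ∀ u v, ‖f' u - f' v‖ ≤ M * ‖u - v‖)
    (a b : E) : ‖f b - f a - f' a (b - a)‖ ≤ M / 2 * ‖b - a‖ ^ 2 := by
  set h := b - a with hh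
  -- compare `t ↦ f (a + t • h) - f a - t • f' a h` with `t ↦ (M / 2) ‖h‖² t²` on `[0, 1]`
  have hg (t : ℝ) : HasDerivAt (fun s : ℝ => f (a + s • h) - f a - s • f' a h)
      (f' (a + t • h) h - f' a h) t := by
    have hline : HasDerivAt (fun s : ℝ => a + s • h) h t := by
      simpa using ((hasDerivAt_id t).smul_const h).const_add a
    have := (((hf _).comp_hasDerivAt t hline).sub_const (f a)).sub
      ((hasDerivAt_id' t).smul_const (f' a h))
    rwa [one_smul] at this
  have hB (t : ℝ) : HasDerivAt (fun s : ℝ => M / 2 * ‖h‖ ^ 2 * s ^ 2) (M * ‖h‖ ^ 2 * t) t := by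
    refine ((hasDerivAt_pow 2 t).const_mul (M / 2 * ‖h‖ ^ 2)).congr_deriv ?_
    ring
  have hbound : ∀ t ∈ Set.Ico (0 : ℝ) 1, ‖f' (a + t • h) h - f' a h‖ ≤ M * ‖h‖ ^ 2 * t := by
    intro t ht
    calc ‖f' (a + t • h) h - f' a h‖ = ‖(f' (a + t • h) - f' a) h‖ := by
          rw [sub_apply]
      _ ≤ ‖f' (a + t • h) - f' a‖ * ‖h‖ := ContinuousLinearMap.le_opNorm _ _
      _ ≤ M * ‖t • h‖ * ‖h‖ := by gcongr; simpa using hf' (a + t • h) a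
      _ = M * ‖h‖ ^ 2 * t := by rw [norm_smul, Real.norm_of_nonneg ht.1]; ring
  have := image_norm_le_of_norm_deriv_right_le_deriv_boundary
    (fun t _ => (hg t).continuousAt.continuousWithinAt) (fun t _ => (hg t).hasDerivWithinAt)
    (by simp) hB hbound (Set.right_mem_Icc.2 zero_le_one)
  simpa [hh] using this

end Taylor

section Gradient

variable {E : Type*} [NormedAddCommGroup E] [InnerProductSpace ℝ E] [CompleteSpace E]

theorem ContDiff.gradient {I : E → ℝ} {n : WithTop ℕ∞} (hI : ContDiff ℝ (n + 1) I) :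
    ContDiff ℝ n (gradient I) :=
  (InnerProductSpace.toDual ℝ E).symm.contDiff.comp (hI.fderiv_right le_rfl)

theorem norm_fderiv_sub_fderiv_eq_norm_gradient_sub_gradient (I : E → ℝ) (u v : E) :
    ‖fderiv ℝ I u - fderiv ℝ I v‖ = ‖gradient I u - gradient I v‖ := by
  rw [gradient, gradient, ← map_sub, LinearIsometryEquiv.norm_map]

theorem abs_sub_sub_inner_gradient_le {I : E → ℝ} (hI : Differentiable ℝ I) {M : ℝ}
    (hlip : ∀ u v, ‖gradient I u - gradient I v‖ ≤ M * ‖u - v‖) (x a b : E) :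
    |I b - I a - ⟪gradient I x, b - a⟫| ≤ M * (‖a - x‖ * ‖b - a‖) + M / 2 * ‖b - a‖ ^ 2 := by
  have htaylor : |I b - I a - fderiv ℝ I a (b - a)| ≤ M / 2 * ‖b - a‖ ^ 2 :=
    norm_image_sub_sub_fderiv_le_of_lipschitz (fun z => (hI z).hasFDerivAt)
      (fun u v => (norm_fderiv_sub_fderiv_eq_norm_gradient_sub_gradient I u v).trans_le
        (hlip u v)) a b
  have hfreeze : |⟪gradient I a - gradient I x, b - a⟫| ≤ M * (‖a - x‖ * ‖b - a‖) :=
    calc |⟪gradient I a - gradient I x, b - a⟫|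
        ≤ ‖gradient I a - gradient I x‖ * ‖b - a‖ := abs_real_inner_le_norm _ _
      _ ≤ M * ‖a - x‖ * ‖b - a‖ := by gcongr; exact hlip a x
      _ = M * (‖a - x‖ * ‖b - a‖) := mul_assoc _ _ _
  have hsplit : I b - I a - ⟪gradient I x, b - a⟫
      = (I b - I a - fderiv ℝ I a (b - a)) + ⟪gradient I a - gradient I x, b - a⟫ := by
    simp only [inner_sub_left, inner_gradient_left]
    ring
  rw [hsplit]
  exact (abs_add_le _ _).trans (by linarith)

end Gradient

namespace MeasureTheory

variable {Ω E : Type*} [MeasurableSpace Ω] {μ : Measure Ω} [NormedAddCommGroup E]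
  {f g : Ω → E}

theorem MemLp.integrable_norm_mul_norm (hf : MemLp f 2 μ) (hg : MemLp g 2 μ) :
    Integrable (fun ω => ‖f ω‖ * ‖g ω‖) μ :=
  hf.norm.integrable_mul hg.norm

theorem integral_norm_mul_norm_le_sqrt_mul_sqrt (hf : MemLp f 2 μ) (hg : MemLp g 2 μ) :
    ∫ ω, ‖f ω‖ * ‖g ω‖ ∂μ ≤ √(∫ ω, ‖f ω‖ ^ 2 ∂μ) * √(∫ ω, ‖g ω‖ ^ 2 ∂μ) := by
  have h := integral_mul_norm_le_Lp_mul_Lq Real.HolderConjugate.two_two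
    (by rwa [ENNReal.ofReal_ofNat] : MemLp f (ENNReal.ofReal 2) μ)
    (by rwa [ENNReal.ofReal_ofNat] : MemLp g (ENNReal.ofReal 2) μ)
  simpa only [Real.rpow_two, Real.sqrt_eq_rpow] using h

end MeasureTheory

section SquareIntegrable

variable {Ω E : Type*} [MeasurableSpace Ω] {μ : Measure Ω} [IsFiniteMeasure μ]
  [NormedAddCommGroup E] [InnerProductSpace ℝ E] [CompleteSpace E]

theorem abs_integral_le_of_abs_sub_inner_le {φ : Ω → ℝ} {D Z : Ω → E} {v : E} {L M : ℝ}
    (hφ : AEStronglyMeasurable φ μ) (hD : MemLp D 2 μ) (hZ : MemLp Z 2 μ) (hv : ‖v‖ ≤ L)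
    (hM : 0 ≤ M)
    (hφD : ∀ᵐ ω ∂μ, |φ ω - ⟪v, D ω⟫| ≤ M * (‖Z ω‖ * ‖D ω‖) + M / 2 * ‖D ω‖ ^ 2) :
    |∫ ω, φ ω ∂μ| ≤ L * ‖∫ ω, D ω ∂μ‖ + M / 2 * ∫ ω, ‖D ω‖ ^ 2 ∂μ +
      M * √(∫ ω, ‖Z ω‖ ^ 2 ∂μ) * √(∫ ω, ‖D ω‖ ^ 2 ∂μ) := by
  have hD1 : Integrable D μ := hD.integrable one_le_two
  have hZD := (hZ.integrable_norm_mul_norm hD).const_mul M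
  have hDD := hD.norm.integrable_sq.const_mul (M / 2)
  have hrem : Integrable (fun ω => φ ω - ⟪v, D ω⟫) μ :=
    (hZD.add hDD).mono' (hφ.sub (aestronglyMeasurable_const.inner hD.1)) hφD
  calc |∫ ω, φ ω ∂μ| = |⟪v, ∫ ω, D ω ∂μ⟫ + ∫ ω, (φ ω - ⟪v, D ω⟫) ∂μ| := by
        rw [← integral_inner hD1, ← integral_add (hD1.const_inner v) hrem]
        simp
    _ ≤ ‖v‖ * ‖∫ ω, D ω ∂μ‖ + ∫ ω, (M * (‖Z ω‖ * ‖D ω‖) + M / 2 * ‖D ω‖ ^ 2) ∂μ :=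
        (abs_add_le _ _).trans (add_le_add (abs_real_inner_le_norm _ _)
          (norm_integral_le_of_norm_le (f := fun ω => φ ω - ⟪v, D ω⟫) (hZD.add hDD) hφD))
    _ = ‖v‖ * ‖∫ ω, D ω ∂μ‖ + M / 2 * ∫ ω, ‖D ω‖ ^ 2 ∂μ + M * ∫ ω, ‖Z ω‖ * ‖D ω‖ ∂μ := by
        rw [integral_add hZD hDD, integral_const_mul, integral_const_mul]
        ring
    _ ≤ _ := by
        rw [mul_assoc M]
        gcongr
        exact integral_norm_mul_norm_le_sqrt_mul_sqrt hZ hD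

end SquareIntegrable

/-- Bound on the mean deviation of the conserved quantity along the supporting
approximation: `|E[I(X̂) − I(x)]| ≤ L|E[X̂ − X]| + (M/2)E[|X̂ − X|²] +
M (E[|X − x|²])^{1/2} (E[|X̂ − X|²])^{1/2}`. -/
theorem mean_invariant_deviation_bound {Ω : Type*} [MeasureSpace Ω]
    [IsProbabilityMeasure (ℙ : Measure Ω)]
    (d : ℕ) (x : EuclideanSpace ℝ (Fin d))
    (X Xhat : Ω → EuclideanSpace ℝ (Fin d))
    (hX : MemLp X 2 ℙ) (hXhat : MemLp Xhat 2 ℙ)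
    (I : EuclideanSpace ℝ (Fin d) → ℝ) (hI : ContDiff ℝ 2 I) (L M : ℝ)
    (hgrad : ∀ z : EuclideanSpace ℝ (Fin d), ‖gradient I z‖ ≤ L)
    (hHess : ∀ z : EuclideanSpace ℝ (Fin d), ‖fderiv ℝ (fun w => gradient I w) z‖ ≤ M)
    (hlevel : ∀ᵐ ω ∂(ℙ : Measure Ω), I (X ω) = I x) :
    |∫ ω, (I (Xhat ω) - I x) ∂(ℙ : Measure Ω)| ≤
      L * ‖∫ ω, (Xhat ω - X ω) ∂(ℙ : Measure Ω)‖ + (M / 2) * ∫ ω, ‖Xhat ω - X ω‖ ^ 2 ∂(ℙ : Measure Ω) +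
      M * Real.sqrt (∫ ω, ‖X ω - x‖ ^ 2 ∂(ℙ : Measure Ω)) * Real.sqrt (∫ ω, ‖Xhat ω - X ω‖ ^ 2 ∂(ℙ : Measure Ω)) := by
  have hlip (u v) : ‖gradient I u - gradient I v‖ ≤ M * ‖u - v‖ :=
    convex_univ.norm_image_sub_le_of_norm_fderiv_le
      (fun z _ => (hI.gradient.differentiable one_ne_zero).differentiableAt)
      (fun z _ => hHess z) trivial trivial
  refine abs_integral_le_of_abs_sub_inner_le
    ((hI.continuous.comp_aestronglyMeasurable hXhat.1).sub aestronglyMeasurable_const)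
    (hXhat.sub hX) (hX.sub (memLp_const x)) (hgrad x) ((norm_nonneg _).trans (hHess x)) ?_
  filter_upwards [hlevel] with ω hω
  rw [← hω]
  exact abs_sub_sub_inner_gradient_le (hI.differentiable two_ne_zero) hlip x (X ω) (Xhat ω)
end

section
/- Let I : ℝ^d → ℝ be differentiable, let f̄, g : ℝ^d → ℝ^d, and let x, X̄ ∈ ℝ^d, h, ΔW, λ ∈ ℝ. Suppose the projected Euler step holds: X̄ = x + h·f̄(x) + ΔW·g(x) + λ·∇I(x) with I(X̄) = I(x), and suppose D ∈ ℝ^d satisfies the discrete-gradient property ⟨D, X̄ − x⟩ = I(X̄) − I(x) together with ⟨D, ∇I(x)⟩ ≠ 0. Then λ = −( h·⟨D, f̄(x)⟩ + ΔW·⟨D, g(x)⟩ ) / ⟨D, ∇I(x)⟩, and X̄ = x + h·S̄D + ΔW·T̄D, where S̄ = (f̄(x)∇I(x)ᵀ − ∇I(x)f̄(x)ᵀ)/⟨D, ∇I(x)⟩ and T̄ = (g(x)∇I(x)ᵀ − ∇I(x)g(x)ᵀ)/⟨D, ∇I(x)⟩ are skew-symmetric matrices. (The projected Euler method with projection direction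 ∇I(x) coincides with a discrete gradient method in skew-gradient form.) -/
/-!
Pairing the projected Euler step with `D` and using `⟪D, X̄ - x⟫ = I(X̄) - I(x) = 0` gives a linear
equation for `λ`. Substituting its solution, the `∇I(x)`-component of the step is exactly what the
skew matrices produce: `(a ∇Iᵀ - ∇I aᵀ) D / ⟪D, ∇I⟫ = a - (⟪D, a⟫ / ⟪D, ∇I⟫) ∇I`.
-/

open scoped RealInnerProductSpace
open Matrix

theorem eq_neg_inner_div_of_inner_add_smul_eq_zero {E : Type*} [NormedAddCommGroup E]
    [InnerProductSpace ℝ E] {v n D : E} {lam : ℝ} (horth : ⟪D, v + lam • n⟫ = 0)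
    (hDn : ⟪D, n⟫ ≠ 0) : lam = -⟪D, v⟫ / ⟪D, n⟫ := by
  rw [inner_add_right, real_inner_smul_right] at horth
  rw [eq_div_iff hDn]
  linarith

theorem transpose_smul_vecMulVec_sub_vecMulVec {R m : Type*} [CommRing R] (c : R) (a b : m → R) :
    (c • (vecMulVec a b - vecMulVec b a))ᵀ = -(c • (vecMulVec a b - vecMulVec b a)) := by
  rw [transpose_smul, transpose_sub, transpose_vecMulVec, transpose_vecMulVec, ← smul_neg,
    neg_sub]

theorem smul_vecMulVec_sub_vecMulVec_mulVec {K m : Type*} [Field K] [Fintype m]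
    (a n D : m → K) (hnD : n ⬝ᵥ D ≠ 0) :
    ((n ⬝ᵥ D)⁻¹ • (vecMulVec a n - vecMulVec n a)) *ᵥ D = a - (a ⬝ᵥ D / (n ⬝ᵥ D)) • n := by
  simp only [smul_mulVec, sub_mulVec, vecMulVec_mulVec, op_smul_eq_smul, smul_sub, smul_smul,
    inv_mul_cancel₀ hnD, one_smul, div_eq_inv_mul]

theorem EuclideanSpace.toLp_smul_vecMulVec_sub_vecMulVec_mulVec {ι : Type*} [Fintype ι]
    (a n D : EuclideanSpace ℝ ι) (hDn : ⟪D, n⟫ ≠ 0) :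
    WithLp.toLp 2 ((⟪D, n⟫⁻¹ • (vecMulVec a n - vecMulVec n a)) *ᵥ D) =
      a - (⟪D, a⟫ / ⟪D, n⟫) • n := by
  simp only [EuclideanSpace.inner_eq_star_dotProduct, star_trivial] at hDn ⊢
  rw [smul_vecMulVec_sub_vecMulVec_mulVec _ _ _ hDn]
  rfl

theorem projected_euler_is_discrete_gradient_general (d : ℕ)
    (I : EuclideanSpace ℝ (Fin d) → ℝ)
    (fbar g : EuclideanSpace ℝ (Fin d) → EuclideanSpace ℝ (Fin d))
    (x Xbar : EuclideanSpace ℝ (Fin d)) (h ΔW lam : ℝ)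
    (hstep : Xbar = x + h • fbar x + ΔW • g x + lam • gradient I x)
    (hcons : I Xbar = I x)
    (D : EuclideanSpace ℝ (Fin d))
    (hD : ⟪D, Xbar - x⟫ = I Xbar - I x)
    (hDg : ⟪D, gradient I x⟫ ≠ 0) :
    lam = -(h * ⟪D, fbar x⟫ + ΔW * ⟪D, g x⟫) / ⟪D, gradient I x⟫ ∧
    ((⟪D, gradient I x⟫⁻¹ •
        (Matrix.vecMulVec (fbar x) (WithLp.equiv 2 (Fin d → ℝ) (gradient I x)) -
          Matrix.vecMulVec (WithLp.equiv 2 (Fin d → ℝ) (gradient I x)) (fbar x)))ᵀ =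
      -(⟪D, gradient I x⟫⁻¹ •
        (Matrix.vecMulVec (fbar x) (WithLp.equiv 2 (Fin d → ℝ) (gradient I x)) -
          Matrix.vecMulVec (WithLp.equiv 2 (Fin d → ℝ) (gradient I x)) (fbar x)))) ∧
    ((⟪D, gradient I x⟫⁻¹ •
        (Matrix.vecMulVec (g x) (WithLp.equiv 2 (Fin d → ℝ) (gradient I x)) -
          Matrix.vecMulVec (WithLp.equiv 2 (Fin d → ℝ) (gradient I x)) (g x)))ᵀ =
      -(⟪D, gradient I x⟫⁻¹ •
        (Matrix.vecMulVec (g x) (WithLp.equiv 2 (Fin d → ℝ) (gradient I x)) -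
          Matrix.vecMulVec (WithLp.equiv 2 (Fin d → ℝ) (gradient I x)) (g x)))) ∧
    Xbar = x +
      h • (WithLp.equiv 2 (Fin d → ℝ)).symm
        ((⟪D, gradient I x⟫⁻¹ •
          (Matrix.vecMulVec (fbar x) (WithLp.equiv 2 (Fin d → ℝ) (gradient I x)) -
            Matrix.vecMulVec (WithLp.equiv 2 (Fin d → ℝ) (gradient I x)) (fbar x))).mulVec D) +
      ΔW • (WithLp.equiv 2 (Fin d → ℝ)).symm
        ((⟪D, gradient I x⟫⁻¹ •
          (Matrix.vecMulVec (g x) (WithLp.equiv 2 (Fin d → ℝ) (gradient I x)) -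
            Matrix.vecMulVec (WithLp.equiv 2 (Fin d → ℝ) (gradient I x)) (g x))).mulVec D) := by
  set n := gradient I x
  have hlam : lam = -(h * ⟪D, fbar x⟫ + ΔW * ⟪D, g x⟫) / ⟪D, n⟫ := by
    have horth : ⟪D, (h • fbar x + ΔW • g x) + lam • n⟫ = 0 := by
      rw [hcons, sub_self, hstep] at hD
      rw [← hD]
      congr 1
      abel
    simpa [inner_add_right, real_inner_smul_right] using
      eq_neg_inner_div_of_inner_add_smul_eq_zero horth hDg
  refine ⟨hlam, transpose_smul_vecMulVec_sub_vecMulVec _ _ _,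
    transpose_smul_vecMulVec_sub_vecMulVec _ _ _, ?_⟩
  simp only [WithLp.equiv_symm_apply, WithLp.equiv_apply,
    EuclideanSpace.toLp_smul_vecMulVec_sub_vecMulVec_mulVec _ _ _ hDg]
  rw [hstep, hlam]
  module

/-- The projected Euler method with projection direction `∇I(x)` coincides with a discrete
gradient method in skew-gradient form: the projection parameter is
`λ = −(h⟨D, f̄(x)⟩ + ΔW⟨D, g(x)⟩)/⟨D, ∇I(x)⟩` and
`X̄ = x + h S̄D + ΔW T̄D` with skew-symmetric `S̄, T̄`. -/
theorem projected_euler_is_discrete_gradient (d : ℕ)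
    (I : EuclideanSpace ℝ (Fin d) → ℝ) (hI : Differentiable ℝ I)
    (fbar g : EuclideanSpace ℝ (Fin d) → EuclideanSpace ℝ (Fin d))
    (x Xbar : EuclideanSpace ℝ (Fin d)) (h ΔW lam : ℝ)
    (hstep : Xbar = x + h • fbar x + ΔW • g x + lam • gradient I x)
    (hcons : I Xbar = I x)
    (D : EuclideanSpace ℝ (Fin d))
    (hD : ⟪D, Xbar - x⟫ = I Xbar - I x)
    (hDg : ⟪D, gradient I x⟫ ≠ 0) :
    lam = -(h * ⟪D, fbar x⟫ + ΔW * ⟪D, g x⟫) / ⟪D, gradient I x⟫ ∧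
    ((⟪D, gradient I x⟫⁻¹ •
        (Matrix.vecMulVec (fbar x) (WithLp.equiv 2 (Fin d → ℝ) (gradient I x)) -
          Matrix.vecMulVec (WithLp.equiv 2 (Fin d → ℝ) (gradient I x)) (fbar x)))ᵀ =
      -(⟪D, gradient I x⟫⁻¹ •
        (Matrix.vecMulVec (fbar x) (WithLp.equiv 2 (Fin d → ℝ) (gradient I x)) -
          Matrix.vecMulVec (WithLp.equiv 2 (Fin d → ℝ) (gradient I x)) (fbar x)))) ∧
    ((⟪D, gradient I x⟫⁻¹ •
        (Matrix.vecMulVec (g x) (WithLp.equiv 2 (Fin d → ℝ) (gradient I x)) -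
          Matrix.vecMulVec (WithLp.equiv 2 (Fin d → ℝ) (gradient I x)) (g x)))ᵀ =
      -(⟪D, gradient I x⟫⁻¹ •
        (Matrix.vecMulVec (g x) (WithLp.equiv 2 (Fin d → ℝ) (gradient I x)) -
          Matrix.vecMulVec (WithLp.equiv 2 (Fin d → ℝ) (gradient I x)) (g x)))) ∧
    Xbar = x +
      h • (WithLp.equiv 2 (Fin d → ℝ)).symm
        ((⟪D, gradient I x⟫⁻¹ •
          (Matrix.vecMulVec (fbar x) (WithLp.equiv 2 (Fin d → ℝ) (gradient I x)) -
            Matrix.vecMulVec (WithLp.equiv 2 (Fin d → ℝ) (gradient I x)) (fbar x))).mulVec D) +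
      ΔW • (WithLp.equiv 2 (Fin d → ℝ)).symm
        ((⟪D, gradient I x⟫⁻¹ •
          (Matrix.vecMulVec (g x) (WithLp.equiv 2 (Fin d → ℝ) (gradient I x)) -
            Matrix.vecMulVec (WithLp.equiv 2 (Fin d → ℝ) (gradient I x)) (g x))).mulVec D) :=
  projected_euler_is_discrete_gradient_general d I fbar g x Xbar h ΔW lam hstep hcons D hD hDg
end
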